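/- arXiv:1408.0377 — 3 statements merged into one kernel-verified Lean document; each statement's English description precedes it below -/
import Mathlib

section
/- Let n, r, m, t be integers with 0 < m < r ≤ n and 0 ≤ t ≤ n. Then ∑_{p = max(1, r-(n-t))}^{min(t,r)} C(t, p)·C(n-t, r-p)·min(p, r-m) ≤ C(n, r)·(r-m), with equality if and only if n - t ≤ m. -/
/-!
Writing `c p = C(t, p) C(n - t, r - p)`, Vandermonde's identity gives `∑ c p = C(n, r)`, and
termwise `c p · min p (r - m) ≤ c p · (r - m)`. Equality holds iff
`r - m ≤ p` whenever `c p ≠ 0`; the least such `p` is `r - (n - t)`, whence the condition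
`n - t ≤ m`.
-/

open Finset

namespace Nat

theorem sum_range_choose_mul_choose (a b r : ℕ) :
    ∑ p ∈ range (r + 1), a.choose p * b.choose (r - p) = (a + b).choose r := by
  rw [add_choose_eq, Finset.Nat.sum_antidiagonal_eq_sum_range_succ_mk]

theorem choose_mul_choose_ne_zero_iff {a b r p : ℕ} :
    a.choose p * b.choose (r - p) ≠ 0 ↔ p ≤ a ∧ r - p ≤ b := by
  simp only [ne_eq, mul_eq_zero, choose_eq_zero_iff, not_or, not_lt]

theorem sum_Icc_choose_mul_choose_mul_eq_sum_range (a b r : ℕ) {w : ℕ → ℕ} (hw : w 0 = 0) :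
    ∑ p ∈ Icc (max 1 (r - b)) (min a r), a.choose p * b.choose (r - p) * w p =
      ∑ p ∈ range (r + 1), a.choose p * b.choose (r - p) * w p := by
  refine sum_subset (fun p hp ↦ ?_) fun p hpr hp ↦ ?_
  · simp only [mem_Icc, mem_range] at hp ⊢
    omega
  · obtain rfl | hp0 := eq_zero_or_pos p
    · rw [hw, mul_zero]
    · have hc : ¬(p ≤ a ∧ r - p ≤ b) := by
        simp only [mem_Icc, mem_range] at hp hpr
        omega
      rw [← choose_mul_choose_ne_zero_iff, not_not] at hc
      rw [hc, zero_mul]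

theorem sum_range_choose_mul_choose_mul_min_le (a b r k : ℕ) :
    ∑ p ∈ range (r + 1), a.choose p * b.choose (r - p) * min p k ≤ (a + b).choose r * k := by
  rw [← sum_range_choose_mul_choose, sum_mul]
  exact sum_le_sum fun p _ ↦ Nat.mul_le_mul_left _ (min_le_right p k)

theorem sum_range_choose_mul_choose_mul_min_eq_iff {a b r : ℕ} (k : ℕ) (hr : r ≤ a + b) :
    ∑ p ∈ range (r + 1), a.choose p * b.choose (r - p) * min p k = (a + b).choose r * k ↔
      k ≤ r - b := by
  rw [← sum_range_choose_mul_choose, sum_mul,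
    sum_eq_sum_iff_of_le fun p _ ↦ Nat.mul_le_mul_left _ (min_le_right p k)]
  have term_eq_iff (p : ℕ) : a.choose p * b.choose (r - p) * min p k =
      a.choose p * b.choose (r - p) * k ↔ (p ≤ a ∧ r - p ≤ b → k ≤ p) := by
    rw [← choose_mul_choose_ne_zero_iff, mul_eq_mul_left_iff, min_eq_right_iff]
    tauto
  simp only [term_eq_iff, mem_range]
  refine ⟨fun h ↦ ?_, fun h p _ hp ↦ by omega⟩
  exact h (r - b) (by omega) ⟨by omega, by omega⟩

end Nat

theorem rank_accumulation_le_general (n r m t : ℕ) (hmr : m < r) (hrn : r ≤ n)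
    (htn : t ≤ n) :
    (∑ p ∈ Finset.Icc (max 1 (r - (n - t))) (min t r),
        t.choose p * (n - t).choose (r - p) * min p (r - m) ≤ n.choose r * (r - m)) ∧
    ((∑ p ∈ Finset.Icc (max 1 (r - (n - t))) (min t r),
        t.choose p * (n - t).choose (r - p) * min p (r - m) = n.choose r * (r - m)) ↔
      n - t ≤ m) := by
  obtain ⟨b, rfl⟩ : ∃ b, n = t + b := ⟨n - t, by omega⟩
  rw [Nat.add_sub_cancel_left,
    Nat.sum_Icc_choose_mul_choose_mul_eq_sum_range t b r (w := (min · (r - m))) (Nat.zero_min _),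
    Nat.sum_range_choose_mul_choose_mul_min_eq_iff _ (by omega)]
  exact ⟨Nat.sum_range_choose_mul_choose_mul_min_le .., by omega⟩

/-- The rank accumulated by `t` nodes is at most the total message size, with equality
iff `n - t ≤ m`. -/
theorem rank_accumulation_le (n r m t : ℕ) (hm : 0 < m) (hmr : m < r) (hrn : r ≤ n)
    (htn : t ≤ n) :
    (∑ p ∈ Finset.Icc (max 1 (r - (n - t))) (min t r),
        t.choose p * (n - t).choose (r - p) * min p (r - m) ≤ n.choose r * (r - m)) ∧
    ((∑ p ∈ Finset.Icc (max 1 (r - (n - t))) (min t r),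
        t.choose p * (n - t).choose (r - p) * min p (r - m) = n.choose r * (r - m)) ↔
      n - t ≤ m) :=
  rank_accumulation_le_general n r m t hmr hrn htn
end

section
/- In a BIBD S_λ(r, n) with message size M_c = N(r-1) where N = λn(n-1)/(r(r-1)), the rank accumulated by any n-2 of the n nodes equals ρ_{n-2} = N(r-1) - λ = λn(n-1)/r - λ; equivalently, removing two nodes destroys exactly λ parity groups' worth of one extra symbol each, since the pair of removed node indices appears in exactly λ blocks. -/
/-!
Let `x, y` be the two nodes outside `T`. A block of size `r` meets `T` in `r - 2` points if it
contains both `x` and `y`, and in at least `r - 1` points otherwise, so it contributes `r - 1`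
to the rank except for a loss of one in each of the `λ` blocks through the pair `{x, y}`.
-/

theorem Multiset.sum_map_boole_eq_card_filter {α : Type*} (s : Multiset α) (p : α → Prop)
    [DecidablePred p] :
    (s.map fun a => if p a then 1 else 0).sum = Multiset.card (s.filter p) := by
  induction s using Multiset.induction with
  | empty => simp
  | cons a s ih => by_cases h : p a <;> simp [h, ih, Nat.add_comm]

section PairComplement

variable {X : Type*} [Fintype X] [DecidableEq X] {T : Finset X} {x y : X}

theorem Finset.sdiff_eq_filter_pair_of_compl_eq (hT : Tᶜ = {x, y}) (B : Finset X) :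
    B \ T = ({x, y} : Finset X).filter (· ∈ B) := by
  ext z
  simp only [Finset.mem_sdiff, Finset.mem_filter, ← hT, Finset.mem_compl]
  tauto

theorem min_card_inter_add_ite_eq_of_compl_eq_pair (hxy : x ≠ y) (hT : Tᶜ = {x, y})
    (B : Finset X) :
    min (B ∩ T).card (B.card - 1) + (if x ∈ B ∧ y ∈ B then 1 else 0) = B.card - 1 := by
  have hsplit := Finset.card_sdiff_add_card_inter B T
  rw [Finset.sdiff_eq_filter_pair_of_compl_eq hT] at hsplit
  by_cases hx : x ∈ B <;> by_cases hy : y ∈ B <;>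
    simp [Finset.filter_insert, Finset.filter_singleton, hx, hy, hxy] at hsplit ⊢ <;> omega

theorem sum_map_min_card_inter_add_card_filter_pair {r : ℕ} {blocks : Multiset (Finset X)}
    (hsize : ∀ B ∈ blocks, B.card = r) (hxy : x ≠ y) (hT : Tᶜ = {x, y}) :
    (blocks.map fun B => min (B ∩ T).card (r - 1)).sum
        + Multiset.card (blocks.filter fun B => x ∈ B ∧ y ∈ B) =
      Multiset.card blocks * (r - 1) := by
  rw [← Multiset.sum_map_boole_eq_card_filter, ← Multiset.sum_map_add,
    Multiset.map_congr rfl fun B hB =>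
      hsize B hB ▸ min_card_inter_add_ite_eq_of_compl_eq_pair hxy hT B,
    Multiset.map_const', Multiset.sum_replicate, smul_eq_mul]

end PairComplement

theorem bibd_rank_n_minus_two_general {X : Type*} [Fintype X] [DecidableEq X]
    (n r lam : ℕ) (hr : 2 ≤ r) (hrn : r < n) (hX : Fintype.card X = n)
    (blocks : Multiset (Finset X))
    (hsize : ∀ B ∈ blocks, B.card = r)
    (hpair : ∀ x y : X, x ≠ y →
      Multiset.card (blocks.filter (fun B => x ∈ B ∧ y ∈ B)) = lam)
    (T : Finset X) (hT : T.card = n - 2) :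
    (blocks.map (fun B => min (B ∩ T).card (r - 1))).sum =
      Multiset.card blocks * (r - 1) - lam := by
  have hcompl : Tᶜ.card = 2 := by
    rw [Finset.card_compl, hT, hX]
    omega
  obtain ⟨x, y, hxy, hTc⟩ := Finset.card_eq_two.mp hcompl
  have hrank := sum_map_min_card_inter_add_card_filter_pair hsize hxy hTc
  rw [hpair x y hxy] at hrank
  omega

/-- In the canonical code from a BIBD `S_λ(r,n)`, any `n-2` nodes accumulate rank
`ρ_{n-2} = N(r-1) - λ`. -/
theorem bibd_rank_n_minus_two {X : Type*} [Fintype X] [DecidableEq X]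
    (n r lam : ℕ) (hr : 2 ≤ r) (hrn : r < n) (hlam : 1 ≤ lam) (hX : Fintype.card X = n)
    (blocks : Multiset (Finset X))
    (hsize : ∀ B ∈ blocks, B.card = r)
    (hpair : ∀ x y : X, x ≠ y →
      Multiset.card (blocks.filter (fun B => x ∈ B ∧ y ∈ B)) = lam)
    (T : Finset X) (hT : T.card = n - 2) :
    (blocks.map (fun B => min (B ∩ T).card (r - 1))).sum =
      Multiset.card blocks * (r - 1) - lam :=
  bibd_rank_n_minus_two_general n r lam hr hrn hX blocks hsize hpair T hT
end

section
/- Let q ≥ r be a prime power, N ≥ 1, and consider the code over F_q of length rN whose codewords are concatenations (c_1, …, c_N) where each c_i = (u_{i,1}, …, u_{i,r-1}, ∑_{j=1}^{r-1} u_{i,j}) with data (u_{i,j}) constrained by u_{N,r-1} = ∑_{j=1}^{r-2} φ_j ∑_{i=1}^{N} u_{i,j} + φ_{r-1} ∑_{i=1}^{N-1} u_{i,r-1}, where φ_1, …, φ_{r-1} ∈ F_q are distinct, nonzero, and φ_j ≠ -1 for 1 ≤ j ≤ r-2. Then the M = N(r-1) - 1 free data symbols are uniquely recoverable from any codeword in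 which, within exactly one index i, two coordinates of c_i are erased and all other coordinates are known. -/
/-!
Let `d = u - u'`. Outside the erased block `i₀` every data symbol of `d` vanishes, so the global
parity check, applied to `d`, collapses to a single check `∑ j, w j * d i₀ j = 0` on block `i₀`.
Its weights are the `φ j`, except that the coefficient of the global parity symbol itself becomes
`-1` when `i₀` is the last block; the hypotheses on `φ` say precisely that these weights are nonzero
and distinct. Together with the local parity of block `i₀` (intact unless it is one of the two
erasures) this is a `2 × 2` system with an invertible matrix `[[1, 1], [w a, w b]]`, or a `1 × 1`
system `w a * x = 0`, so `d` vanishes on block `i₀` too.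
-/

open Finset Function

lemma Finset.sum_range_sub_one_of_two_le {M : Type*} [AddCommMonoid M] {r : ℕ} (hr : 2 ≤ r)
    (f : ℕ → M) : ∑ j ∈ range (r - 1), f j = ∑ j ∈ range (r - 2), f j + f (r - 2) := by
  rw [show r - 1 = r - 2 + 1 by omega, sum_range_succ]

lemma Set.InjOn.update {α β : Type*} [DecidableEq α] {f : α → β} {s : Set α} {a : α} {c : β}
    (hf : Set.InjOn f s) (hc : ∀ x ∈ s, x ≠ a → f x ≠ c) : Set.InjOn (update f a c) s := by
  intro x hx y hy hxy
  by_cases hxa : x = a <;> by_cases hya : y = a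
  · rw [hxa, hya]
  · rw [hxa, update_self, update_of_ne hya] at hxy
    exact absurd hxy.symm (hc y hy hya)
  · rw [hya, update_self, update_of_ne hxa] at hxy
    exact absurd hxy (hc x hx hxa)
  · rw [update_of_ne hxa, update_of_ne hya] at hxy
    exact hf hx hy hxy

section TwoErasures

variable {ι F : Type*} [Field F] {s : Finset ι} {w x : ι → F} {a b : ι}

lemma eq_zero_of_weighted_sum_eq_zero (hab : a ≠ b) (hw0 : ∀ j ∈ s, w j ≠ 0)
    (hwinj : Set.InjOn w s) (hx : ∀ j ∈ s, j ≠ a → j ≠ b → x j = 0)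
    (hweighted : ∑ j ∈ s, w j * x j = 0) (hparity : a ∈ s → b ∈ s → ∑ j ∈ s, x j = 0) :
    ∀ j ∈ s, x j = 0 := by
  intro j hj
  by_cases hjab : j ≠ a ∧ j ≠ b
  · exact hx j hj hjab.1 hjab.2
  by_cases hs : a ∈ s ∧ b ∈ s
  · obtain ⟨ha, hb⟩ := hs
    have hxy : x a + x b = 0 :=
      (sum_eq_add_of_mem a b ha hb hab fun k hk hkab ↦ hx k hk hkab.1 hkab.2).symm.trans
        (hparity ha hb)
    have hwxy : w a * x a + w b * x b = 0 :=
      (sum_eq_add_of_mem a b ha hb hab fun k hk hkab ↦ by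
        rw [hx k hk hkab.1 hkab.2, mul_zero]).symm.trans hweighted
    have hwab : w a - w b ≠ 0 := sub_ne_zero.mpr fun h ↦ hab (hwinj ha hb h)
    have hxa : x a = 0 :=
      (mul_eq_zero.mp (by linear_combination hwxy - w b * hxy)).resolve_left hwab
    have hxb : x b = 0 := by linear_combination hxy - hxa
    obtain rfl | rfl : j = a ∨ j = b := by tauto
    exacts [hxa, hxb]
  · -- only `j` among `a, b` lies in `s`, so the weighted check reads `w j * x j = 0`
    have hsingle : ∑ k ∈ s, w k * x k = w j * x j := by
      refine sum_eq_single_of_mem j hj fun k hk hkj ↦ ?_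
      rw [hx k hk (by rintro rfl; grind) (by rintro rfl; grind), mul_zero]
    exact (mul_eq_zero.mp (hsingle ▸ hweighted)).resolve_left (hw0 j hj)

end TwoErasures

section GlobalParityCheck

variable {F : Type*} [Field F] (φ : ℕ → F)

def globalParityCheck (r N : ℕ) (u : ℕ → ℕ → F) : F :=
  (∑ j ∈ range (r - 2), φ j * ∑ i ∈ range N, u i j) +
    φ (r - 2) * ∑ i ∈ range (N - 1), u i (r - 2) - u (N - 1) (r - 2)

variable {r N : ℕ}

lemma globalParityCheck_sub (u u' : ℕ → ℕ → F) :
    globalParityCheck φ r N (u - u') = globalParityCheck φ r N u - globalParityCheck φ r N u' := by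
  simp only [globalParityCheck, Pi.sub_apply, sum_sub_distrib, mul_sub]
  ring

variable {d : ℕ → ℕ → F} {i₀ : ℕ}

lemma globalParityCheck_eq_sum_of_lt (hr : 2 ≤ r) (hi₀ : i₀ < N - 1)
    (hd : ∀ i < N, ∀ j < r - 1, i ≠ i₀ → d i j = 0) :
    globalParityCheck φ r N d = ∑ j ∈ range (r - 1), φ j * d i₀ j := by
  have hcol : ∀ n ≤ N, i₀ < n → ∀ j < r - 1, ∑ i ∈ range n, d i j = d i₀ j := fun n hn hin j hj ↦
    sum_eq_single_of_mem i₀ (mem_range.mpr hin) fun i hi hii₀ ↦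
      hd i (by grind) j hj hii₀
  have hcorner : d (N - 1) (r - 2) = 0 := hd _ (by omega) _ (by omega) (by omega)
  rw [globalParityCheck, hcorner, sub_zero, sum_range_sub_one_of_two_le hr,
    hcol (N - 1) (by omega) hi₀ (r - 2) (by omega)]
  congr 1
  exact sum_congr rfl fun j hj ↦ by rw [hcol N le_rfl (by omega) j (by grind)]

lemma globalParityCheck_eq_sum_of_last (hr : 2 ≤ r) (hN : 0 < N)
    (hd : ∀ i < N, ∀ j < r - 1, i ≠ N - 1 → d i j = 0) :
    globalParityCheck φ r N d = ∑ j ∈ range (r - 1), update φ (r - 2) (-1) j * d (N - 1) j := by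
  have hcol : ∀ j < r - 1, ∑ i ∈ range N, d i j = d (N - 1) j := fun j hj ↦
    sum_eq_single_of_mem (N - 1) (mem_range.mpr (by omega)) fun i hi hiN ↦
      hd i (mem_range.mp hi) j hj hiN
  have hprefix : ∑ i ∈ range (N - 1), d i (r - 2) = 0 :=
    sum_eq_zero fun i hi ↦ hd i (by grind) _ (by omega) (by grind)
  rw [globalParityCheck, hprefix, mul_zero, add_zero, sum_range_sub_one_of_two_le hr, update_self,
    neg_one_mul, ← sub_eq_add_neg]
  congr 1
  refine sum_congr rfl fun j hj ↦ ?_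
  have hj : j < r - 2 := mem_range.mp hj
  rw [hcol j (by omega), update_of_ne (by omega)]

lemma exists_block_check (hr : 2 ≤ r) (hφ0 : ∀ j < r - 1, φ j ≠ 0)
    (hφinj : ∀ j₁ < r - 1, ∀ j₂ < r - 1, φ j₁ = φ j₂ → j₁ = j₂) (hφ1 : ∀ j < r - 2, φ j ≠ -1)
    (hi₀ : i₀ < N) (hd : ∀ i < N, ∀ j < r - 1, i ≠ i₀ → d i j = 0)
    (hcheck : globalParityCheck φ r N d = 0) :
    ∃ w : ℕ → F, (∀ j ∈ range (r - 1), w j ≠ 0) ∧ Set.InjOn w ↑(range (r - 1)) ∧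
      ∑ j ∈ range (r - 1), w j * d i₀ j = 0 := by
  have hinj : Set.InjOn φ ↑(range (r - 1)) := fun j₁ h₁ j₂ h₂ ↦
    hφinj j₁ (mem_range.mp h₁) j₂ (mem_range.mp h₂)
  rcases (show i₀ < N - 1 ∨ i₀ = N - 1 by omega) with hlt | rfl
  · exact ⟨φ, fun j hj ↦ hφ0 j (mem_range.mp hj), hinj,
      globalParityCheck_eq_sum_of_lt φ hr hlt hd ▸ hcheck⟩
  · refine ⟨update φ (r - 2) (-1), fun j hj ↦ ?_, hinj.update fun j hj hjr ↦ ?_,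
      globalParityCheck_eq_sum_of_last φ hr (by omega) hd ▸ hcheck⟩
    · by_cases hjr : j = r - 2
      · simp [hjr]
      · rw [update_of_ne hjr]
        exact hφ0 j (mem_range.mp hj)
    · exact hφ1 j (by grind)

end GlobalParityCheck

/-- Indices are 0-based: data columns are `0, …, r-2`, the parity column is `r-1`, and the global
parity symbol is `u (N-1) (r-2)`. -/
theorem embedded_mds_two_erasure_recovery_general (F : Type*) [Field F]
    (r N : ℕ) (hr : 2 ≤ r)
    (φ : ℕ → F)
    (hφ0 : ∀ j < r - 1, φ j ≠ 0)
    (hφinj : ∀ j₁ < r - 1, ∀ j₂ < r - 1, φ j₁ = φ j₂ → j₁ = j₂)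
    (hφ1 : ∀ j < r - 2, φ j ≠ -1)
    (c : (ℕ → ℕ → F) → ℕ → ℕ → F)
    (hc : ∀ u : ℕ → ℕ → F, ∀ i j : ℕ,
      c u i j = if j < r - 1 then u i j else ∑ j' ∈ Finset.range (r - 1), u i j')
    (u u' : ℕ → ℕ → F)
    (hcon : u (N - 1) (r - 2) =
      (∑ j ∈ Finset.range (r - 2), φ j * ∑ i ∈ Finset.range N, u i j) +
        φ (r - 2) * ∑ i ∈ Finset.range (N - 1), u i (r - 2))
    (hcon' : u' (N - 1) (r - 2) =
      (∑ j ∈ Finset.range (r - 2), φ j * ∑ i ∈ Finset.range N, u' i j) +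
        φ (r - 2) * ∑ i ∈ Finset.range (N - 1), u' i (r - 2))
    (i₀ j₁ j₂ : ℕ) (hi₀ : i₀ < N) (hj₁ : j₁ < r) (hj₂ : j₂ < r) (hjj : j₁ ≠ j₂)
    (hagree : ∀ i < N, ∀ j < r,
      (i ≠ i₀ ∨ (j ≠ j₁ ∧ j ≠ j₂)) → c u i j = c u' i j) :
    ∀ i < N, ∀ j < r - 1, u i j = u' i j := by
  set d := u - u'
  have hdata : ∀ i < N, ∀ j < r - 1, (i ≠ i₀ ∨ (j ≠ j₁ ∧ j ≠ j₂)) → d i j = 0 := by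
    intro i hi j hj h
    have hij := hagree i hi j (by omega) h
    rw [hc, hc, if_pos hj, if_pos hj] at hij
    exact sub_eq_zero.mpr hij
  have hparity : j₁ ∈ range (r - 1) → j₂ ∈ range (r - 1) → ∑ j ∈ range (r - 1), d i₀ j = 0 := by
    intro h₁ h₂
    have hsum := hagree i₀ hi₀ (r - 1) (by omega) (Or.inr ⟨by grind, by grind⟩)
    simp only [hc, lt_irrefl, if_false] at hsum
    simp only [d, Pi.sub_apply, sum_sub_distrib, hsum, sub_self]
  have hcheck : globalParityCheck φ r N d = 0 := by
    rw [globalParityCheck_sub, show globalParityCheck φ r N u = 0 from sub_eq_zero_of_eq hcon.symm,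
      show globalParityCheck φ r N u' = 0 from sub_eq_zero_of_eq hcon'.symm, sub_zero]
  obtain ⟨w, hw0, hwinj, hweighted⟩ :=
    exists_block_check φ hr hφ0 hφinj hφ1 hi₀ (fun i hi j hj h ↦ hdata i hi j hj (Or.inl h)) hcheck
  have hblock := eq_zero_of_weighted_sum_eq_zero hjj hw0 hwinj
    (fun j hj h₁ h₂ ↦ hdata i₀ hi₀ j (mem_range.mp hj) (Or.inr ⟨h₁, h₂⟩)) hweighted hparity
  intro i hi j hj
  rw [← sub_eq_zero]
  by_cases hii₀ : i = i₀
  · exact hii₀ ▸ hblock j (mem_range.mpr hj)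
  · exact hdata i hi j hj (Or.inl hii₀)

/-- Data recovery for the `[n, k=n-2, d=n-1]` construction: with per-block single-parity
codes and one global parity symbol `u_{N,r-1}` with coefficients `φ_j` that are distinct,
nonzero, and `φ_j ≠ -1` for `j ≤ r-2`, the data is uniquely recoverable from any codeword
in which two coordinates within a single parity group are erased. Indices are 0-based:
data columns are `0, …, r-2`, the parity column is `r-1`, and the global parity is
`u_{N-1, r-2}`. -/
theorem embedded_mds_two_erasure_recovery (F : Type*) [Field F] [Fintype F]
    (q r N : ℕ) (hq : q = Fintype.card F) (hr : 2 ≤ r) (hqr : r ≤ q) (hN : 1 ≤ N)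
    (φ : ℕ → F)
    (hφ0 : ∀ j < r - 1, φ j ≠ 0)
    (hφinj : ∀ j₁ < r - 1, ∀ j₂ < r - 1, φ j₁ = φ j₂ → j₁ = j₂)
    (hφ1 : ∀ j < r - 2, φ j ≠ -1)
    (c : (ℕ → ℕ → F) → ℕ → ℕ → F)
    (hc : ∀ u : ℕ → ℕ → F, ∀ i j : ℕ,
      c u i j = if j < r - 1 then u i j else ∑ j' ∈ Finset.range (r - 1), u i j')
    (u u' : ℕ → ℕ → F)
    (hcon : u (N - 1) (r - 2) =
      (∑ j ∈ Finset.range (r - 2), φ j * ∑ i ∈ Finset.range N, u i j) +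
        φ (r - 2) * ∑ i ∈ Finset.range (N - 1), u i (r - 2))
    (hcon' : u' (N - 1) (r - 2) =
      (∑ j ∈ Finset.range (r - 2), φ j * ∑ i ∈ Finset.range N, u' i j) +
        φ (r - 2) * ∑ i ∈ Finset.range (N - 1), u' i (r - 2))
    (i₀ j₁ j₂ : ℕ) (hi₀ : i₀ < N) (hj₁ : j₁ < r) (hj₂ : j₂ < r) (hjj : j₁ ≠ j₂)
    (hagree : ∀ i < N, ∀ j < r,
      (i ≠ i₀ ∨ (j ≠ j₁ ∧ j ≠ j₂)) → c u i j = c u' i j) :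
    ∀ i < N, ∀ j < r - 1, u i j = u' i j :=
  embedded_mds_two_erasure_recovery_general F r N hr φ hφ0 hφinj hφ1 c hc u u' hcon hcon' i₀ j₁ j₂
    hi₀ hj₁ hj₂ hjj hagree
end
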